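/- KMS detailed balance: Let σ be an invertible density matrix and P any Hermitian matrix, and let L^P(ρ) = −i[G^P, ρ] + A^P ρ (A^P)† − ½{(A^P)† A^P, ρ} be the balanced Lindbladian with A^P = σ^{1/4} P σ^{−1/4} and, in the eigenbasis of σ (eigenvalues σ_i), G^P_{ij} = −i·((σ_i^{1/2} − σ_j^{1/2})/(2·σ_i^{1/4}·σ_j^{1/4}·(σ_i^{1/2} + σ_j^{1/2})))·Σ_k σ_k^{1/2} P_{ik} P_{kj}. Then L^P satisfies Kubo–Martin–Schwinger detailed balance with respect to σ: for every matrix B, L^P(σ^{1/2} B σ^{1/2}) = σ^{1/2}·(L^P)†(B)·σ^{1/2}, where (L^P)†(B) = i[G^P, B] + (A^P)† B A^P − ½{(A^P)† A^P, B} is the adjoint of L^P with respect to the trace inner product. -/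

import Mathlib

open scoped BigOperators
open Classical
open scoped ComplexOrder

noncomputable section

/-- Index type for the standard basis of the `n`-qubit Hilbert space `(ℂ²)^{⊗n}`. -/
abbrev QIdx (n : ℕ) := Fin n → Fin 2

/-- Operators (matrices) on the `n`-qubit Hilbert space `(ℂ²)^{⊗n}`. -/
abbrev QMat (n : ℕ) := Matrix (QIdx n) (QIdx n) ℂ

/-- The trace norm (Schatten 1-norm) of a matrix: `‖A‖₁ = tr √(AᴴA)`. -/
noncomputable def traceNorm {I : Type} [Fintype I] [DecidableEq I] (A : Matrix I I ℂ) : ℝ :=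
  (((Matrix.posSemidef_conjTranspose_mul_self A).1.eigenvectorUnitary : Matrix I I ℂ) *
    Matrix.diagonal (((↑) : ℝ → ℂ) ∘ (Real.sqrt ·) ∘ (Matrix.posSemidef_conjTranspose_mul_self A).1.eigenvalues) *
    (star (Matrix.posSemidef_conjTranspose_mul_self A).1.eigenvectorUnitary : Matrix I I ℂ)).trace.re

/-- The operator norm (spectral norm) of a complex matrix. -/
noncomputable def opNorm {I : Type} [Fintype I] [DecidableEq I] (A : Matrix I I ℂ) : ℝ :=
  ‖Matrix.toEuclideanCLM (𝕜 := ℂ) A‖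

/-- The partial trace of an `n`-qubit operator over the qubit at site `i`, as an operator
on the remaining qubits. -/
noncomputable def ptraceSite {n : ℕ} (i : Fin n) (X : QMat n) :
    Matrix ({j : Fin n // j ≠ i} → Fin 2) ({j : Fin n // j ≠ i} → Fin 2) ℂ :=
  fun a b => ∑ s : Fin 2,
    X (fun j => if h : j = i then s else a ⟨j, h⟩) (fun j => if h : j = i then s else b ⟨j, h⟩)

/-- A transport plan for a (traceless Hermitian) operator `X`: a decomposition
`X = Σ_i X_i` into Hermitian matrices with `tr_i(X_i) = 0`. -/
structure IsTransportPlan {n : ℕ} (X : QMat n) (Xs : Fin n → QMat n) : Prop where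
  herm : ∀ i, (Xs i).IsHermitian
  traceless : ∀ i, (Xs i).trace = 0
  sum_eq : ∑ i, Xs i = X
  ptrace_eq : ∀ i, ptraceSite i (Xs i) = 0

/-- The quantum Wasserstein norm of order 1 of De Palma–Marvian–Trevisan–Lloyd. -/
noncomputable def wnorm {n : ℕ} (X : QMat n) : ℝ :=
  sInf {c : ℝ | ∃ Xs : Fin n → QMat n, IsTransportPlan X Xs ∧ c = ∑ i, traceNorm (Xs i) / 2}

/-- A density matrix: positive semidefinite with unit trace. -/
def IsDensity {n : ℕ} (ρ : QMat n) : Prop := ρ.PosSemidef ∧ ρ.trace = 1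

/-- The Dobrushin influence matrix of a map `Φ = Φ₁ + ⋯ + Φ_n`:
`D_{ij} = max { ‖Φ_i(ρ − ϱ)‖_{W1} : ρ, ϱ density matrices with tr_j(ρ − ϱ) = 0 }`. -/
noncomputable def dobrushin {n : ℕ} (Φs : Fin n → (QMat n → QMat n)) :
    Matrix (Fin n) (Fin n) ℝ :=
  fun i j => sSup {w : ℝ | ∃ ρ ϱ : QMat n, IsDensity ρ ∧ IsDensity ϱ ∧
    ptraceSite j (ρ - ϱ) = 0 ∧ w = wnorm (Φs i (ρ - ϱ))}

/-- The `1 → 1` norm of a real matrix: the maximum column `ℓ₁`-norm. -/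
noncomputable def norm11 {n : ℕ} (D : Matrix (Fin n) (Fin n) ℝ) : ℝ :=
  ⨆ j, ∑ i, |D i j|

/-- `Q` is an update matrix for `Φ` if `Φ` maps any transport plan with cost vector `x`
to a transport plan with cost vector entrywise at most `Q x`. -/
def IsUpdateMatrix {n : ℕ} (Q : Matrix (Fin n) (Fin n) ℝ) (Φ : QMat n → QMat n) : Prop :=
  ∀ (X : QMat n) (Xs : Fin n → QMat n), IsTransportPlan X Xs →
    ∃ Ys : Fin n → QMat n, IsTransportPlan (Φ X) Ys ∧
      ∀ j, traceNorm (Ys j) / 2 ≤ Q.mulVec (fun i => traceNorm (Xs i) / 2) j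

/-! ### Hamiltonian combinatorics -/

/-- `M` is supported on the set of qubits `S` (i.e. `M = M_S ⊗ Id`). -/
def SupportedOn {n : ℕ} (S : Finset (Fin n)) (M : QMat n) : Prop :=
  (∀ a b : QIdx n, (∃ j, j ∉ S ∧ a j ≠ b j) → M a b = 0) ∧
  (∀ a b a' b' : QIdx n, (∀ j ∈ S, a j = a' j) → (∀ j ∈ S, b j = b' j) →
     (∀ j ∉ S, a j = b j) → (∀ j ∉ S, a' j = b' j) → M a b = M a' b')

/-- The support of an operator: the minimal set of qubits on which it acts nontrivially. -/
noncomputable def supp {n : ℕ} (M : QMat n) : Finset (Fin n) :=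
  (Finset.univ.filter fun S : Finset (Fin n) => SupportedOn S M).inf id

/-- The interaction graph of a local Hamiltonian: two distinct sites are adjacent iff
some term's support contains both. -/
def interGraph {n m : ℕ} (Hterm : Fin m → QMat n) : SimpleGraph (Fin n) where
  Adj i j := i ≠ j ∧ ∃ a, i ∈ supp (Hterm a) ∧ j ∈ supp (Hterm a)
  symm := ⟨by
    rintro i j ⟨hij, a, hi, hj⟩
    exact ⟨hij.symm, a, hj, hi⟩⟩
  loopless := ⟨by
    rintro i ⟨hii, -⟩
    exact hii rfl⟩

/-- The graph distance on sites induced by the interaction hypergraph. -/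
noncomputable def hamDist {n m : ℕ} (Hterm : Fin m → QMat n) (i j : Fin n) : ℕ :=
  (interGraph Hterm).dist i j

/-- The ball of radius `r` around site `i` in the interaction graph distance. -/
noncomputable def ballH {n m : ℕ} (Hterm : Fin m → QMat n) (i : Fin n) (r : ℕ) :
    Finset (Fin n) :=
  Finset.univ.filter fun j => hamDist Hterm i j ≤ r

/-- Distance from a site to a set of sites. -/
noncomputable def distToSet {n m : ℕ} (Hterm : Fin m → QMat n) (j : Fin n)
    (S : Finset (Fin n)) : ℕ :=
  sInf {r : ℕ | ∃ i ∈ S, hamDist Hterm j i = r}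

/-- Distance between two sets of sites. -/
noncomputable def setDist {n m : ℕ} (Hterm : Fin m → QMat n) (S T : Finset (Fin n)) : ℕ :=
  sInf {r : ℕ | ∃ i ∈ S, ∃ j ∈ T, hamDist Hterm i j = r}

/-- For `S ⊆ [n]`, the real matrix `E_S` with `(E_S)_{uv} = 1` iff `u, v ∈ S`. -/
def ESet {n : ℕ} (S : Finset (Fin n)) : Matrix (Fin n) (Fin n) ℝ :=
  fun u v => if u ∈ S ∧ v ∈ S then 1 else 0

/-- `S_a`: the union of the supports of the terms appearing in the sequence `a`. -/
noncomputable def SOf {n m : ℕ} (Hterm : Fin m → QMat n) {s : ℕ} (a : Fin s → Fin m) :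
    Finset (Fin n) :=
  Finset.univ.biUnion fun ℓ => supp (Hterm (a ℓ))

/-- `a` is a cluster from the set `S₀`: each term's support intersects `S₀` together with
the supports of the previous terms. -/
def IsClusterFrom {n m : ℕ} (Hterm : Fin m → QMat n) (S0 : Finset (Fin n)) {s : ℕ}
    (a : Fin s → Fin m) : Prop :=
  ∀ ℓ : Fin s, ∃ j ∈ supp (Hterm (a ℓ)),
    j ∈ S0 ∨ ∃ p : Fin s, p < ℓ ∧ j ∈ supp (Hterm (a p))

/-- The ball of radius `r` around a set of sites. -/
noncomputable def ballOfSet {n m : ℕ} (Hterm : Fin m → QMat n) (S : Finset (Fin n)) (r : ℕ) :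
    Finset (Fin n) :=
  Finset.univ.filter fun j => distToSet Hterm j S ≤ r

/-! ### Matrix exponentials, Gibbs states, and the balanced Lindbladian -/

/-- The matrix exponential, via its power series. -/
noncomputable def mexp {I : Type} [Fintype I] [DecidableEq I] (A : Matrix I I ℂ) :
    Matrix I I ℂ :=
  ∑' k : ℕ, ((k.factorial : ℂ)⁻¹ • A ^ k)

/-- The Gibbs state `σ = e^{−βH} / tr(e^{−βH})` at inverse temperature `β`. -/
noncomputable def gibbs {I : Type} [Fintype I] [DecidableEq I] (β : ℝ) (H : Matrix I I ℂ) :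
    Matrix I I ℂ :=
  (mexp ((-β : ℂ) • H)).trace⁻¹ • mexp ((-β : ℂ) • H)

/-- The real power `A^r` of a Hermitian matrix, via its spectral decomposition. -/
noncomputable def hermPow {I : Type} [Fintype I] [DecidableEq I] (A : Matrix I I ℂ) (r : ℝ) :
    Matrix I I ℂ :=
  if h : A.IsHermitian then
    (h.eigenvectorUnitary : Matrix I I ℂ) *
      Matrix.diagonal (fun i => ((h.eigenvalues i ^ r : ℝ) : ℂ)) *
      star (h.eigenvectorUnitary : Matrix I I ℂ)
  else 0

/-- The coherent term `G^P` of the balanced Lindbladian, defined in the eigenbasis of `σ`. -/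
noncomputable def coherentG {I : Type} [Fintype I] [DecidableEq I] (σ P : Matrix I I ℂ) :
    Matrix I I ℂ :=
  if h : σ.IsHermitian then
    let U : Matrix I I ℂ := h.eigenvectorUnitary
    let lam : I → ℝ := h.eigenvalues
    let P' : Matrix I I ℂ := star U * P * U
    let w : I → I → ℝ := fun i j =>
      (lam i ^ ((1:ℝ)/2) - lam j ^ ((1:ℝ)/2)) /
        (2 * lam i ^ ((1:ℝ)/4) * lam j ^ ((1:ℝ)/4) *
          (lam i ^ ((1:ℝ)/2) + lam j ^ ((1:ℝ)/2)))
    let G' : Matrix I I ℂ := Matrix.of (fun i j =>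
      (-Complex.I) * ((w i j : ℝ) : ℂ) *
        (∑ t, ((lam t ^ ((1:ℝ)/2) : ℝ) : ℂ) * P' i t * P' t j))
    U * G' * star U
  else 0

/-- The jump operator `A^P = σ^{1/4} P σ^{−1/4}`. -/
noncomputable def jumpA {I : Type} [Fintype I] [DecidableEq I] (σ P : Matrix I I ℂ) :
    Matrix I I ℂ :=
  hermPow σ ((1:ℝ)/4) * P * hermPow σ (-((1:ℝ)/4))

/-- The Lindblad generator `ρ ↦ −i[G,ρ] + AρA† − ½{A†A, ρ}` as a linear endomorphism. -/
noncomputable def lindbladOp {I : Type} [Fintype I] [DecidableEq I] (G A : Matrix I I ℂ) :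
    Module.End ℂ (Matrix I I ℂ) :=
  (-Complex.I) • (LinearMap.mulLeft ℂ G - LinearMap.mulRight ℂ G)
    + (LinearMap.mulRight ℂ (star A)) ∘ₗ (LinearMap.mulLeft ℂ A)
    - ((1:ℂ)/2) • (LinearMap.mulLeft ℂ (star A * A) + LinearMap.mulRight ℂ (star A * A))

/-- The balanced Lindbladian `L^P` for jump `P` with invariant state `σ`. -/
noncomputable def LP {I : Type} [Fintype I] [DecidableEq I] (σ P : Matrix I I ℂ) :
    Module.End ℂ (Matrix I I ℂ) :=
  lindbladOp (coherentG σ P) (jumpA σ P)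

/-- The three nonidentity single-qubit Pauli matrices. -/
noncomputable def pauli1 : Fin 3 → Matrix (Fin 2) (Fin 2) ℂ :=
  ![!![0, 1; 1, 0], !![0, -Complex.I; Complex.I, 0], !![1, 0; 0, -1]]

/-- The Pauli matrix `σ_p` acting at site `j` of an `n`-qubit system. -/
noncomputable def pauliAt {n : ℕ} (j : Fin n) (p : Fin 3) : QMat n :=
  fun a b => (if ∀ l, l ≠ j → a l = b l then 1 else 0) * pauli1 p (a j) (b j)

/-- The site-`j` balanced Lindbladian `L_j* = Σ_{P ∈ P_j} L^P`. -/
noncomputable def siteL {n : ℕ} (σ : QMat n) (j : Fin n) : Module.End ℂ (QMat n) :=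
  ∑ p : Fin 3, LP σ (pauliAt j p)

/-- The balanced Lindbladian `L* = Σ_j L_j*`. -/
noncomputable def fullL {n : ℕ} (σ : QMat n) : Module.End ℂ (QMat n) :=
  ∑ j, siteL σ j

/-- The quantum dynamical semigroup `e^{L}` generated by a Lindbladian, applied to a state. -/
noncomputable def superExp {n : ℕ} (L : Module.End ℂ (QMat n)) (ρ : QMat n) : QMat n :=
  ∑' k : ℕ, ((k.factorial : ℂ)⁻¹ • (L ^ k) ρ)

/-! ### Entropic quantities -/

/-- The von Neumann entropy `S(ρ) = −tr(ρ log ρ)` of a (Hermitian) matrix. -/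
noncomputable def vnEntropy {I : Type} [Fintype I] [DecidableEq I] (ρ : Matrix I I ℂ) : ℝ :=
  if h : ρ.IsHermitian then -∑ i, h.eigenvalues i * Real.log (h.eigenvalues i) else 0

/-- The reduced operator on the subsystem `S`: the partial trace over the complement of `S`. -/
noncomputable def reduceTo {n : ℕ} (S : Finset (Fin n)) (X : QMat n) :
    Matrix ({j : Fin n // j ∈ S} → Fin 2) ({j : Fin n // j ∈ S} → Fin 2) ℂ :=
  fun a b => ∑ c : {j : Fin n // j ∉ S} → Fin 2,
    X (fun j => if h : j ∈ S then a ⟨j, h⟩ else c ⟨j, h⟩)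
      (fun j => if h : j ∈ S then b ⟨j, h⟩ else c ⟨j, h⟩)

/-!
With `S = σ^{1/2}`, a Lindblad form `ρ ↦ Kρ + AρA† + ρK'` with `K = -iG - ½A†A` and
`K' = iG - ½A†A` satisfies `L(SBS) = S L†(B) S` as soon as `A S = S A†` and `K S = S K'`.
The first relation holds because both sides equal `σ^{1/4} P σ^{1/4}`. The second is checked
entrywise in the eigenbasis of `σ`: there `G^P_{ij} = -i w_{ij} c_{ij}` and
`(A†A)_{ij} = c_{ij} / (x_i x_j)` with `x_i = σ_i^{1/4}` and `c_{ij} = Σ_k σ_k^{1/2} P_{ik} P_{kj}`,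
so `K S = S K'` reduces to `(-w_{ij} - 1/(2 x_i x_j)) x_j² = x_i² (w_{ij} - 1/(2 x_i x_j))`,
which is exactly the equation that defines the weight `w_{ij}`.
-/

theorem kms_identity_of_intertwine {R : Type*} [Ring R] {S K K' A A' : R}
    (hK : K * S = S * K') (hA : A * S = S * A') (B : R) :
    K * (S * B * S) + A * (S * B * S) * A' + S * B * S * K' =
      S * (K' * B + A' * B * A + B * K) * S := by
  have hK' : S * B * S * K' = S * B * K * S := by
    rw [mul_assoc _ S, ← hK, mul_assoc (S * B)]
  have hA' : A * (S * B * S) * A' = S * (A' * B * A) * S := by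
    calc A * (S * B * S) * A' = (A * S) * B * (S * A') := by noncomm_ring
      _ = (S * A') * B * (A * S) := by rw [hA]
      _ = S * (A' * B * A) * S := by noncomm_ring
  calc K * (S * B * S) + A * (S * B * S) * A' + S * B * S * K'
      = S * K' * B * S + S * (A' * B * A) * S + S * B * K * S := by
        rw [hK', hA', ← mul_assoc K, ← mul_assoc K, hK]
    _ = S * (K' * B + A' * B * A + B * K) * S := by noncomm_ring

section Balanced

open Matrix Unitary

variable {I : Type} [Fintype I] [DecidableEq I]

lemma lindbladOp_apply (G A ρ : Matrix I I ℂ) :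
    lindbladOp G A ρ =
      ((-Complex.I) • G - ((1:ℂ)/2) • (star A * A)) * ρ + A * ρ * star A +
        ρ * (Complex.I • G - ((1:ℂ)/2) • (star A * A)) := by
  simp only [lindbladOp, LinearMap.sub_apply, LinearMap.add_apply, LinearMap.smul_apply,
    LinearMap.coe_comp, Function.comp_apply, LinearMap.mulLeft_apply, LinearMap.mulRight_apply]
  simp only [sub_mul, mul_sub, smul_mul_assoc, mul_smul_comm, smul_sub, smul_add, neg_smul, neg_mul]
  module

def rpowDiag (lam : I → ℝ) (r : ℝ) : Matrix I I ℂ :=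
  diagonal fun i => ((lam i ^ r : ℝ) : ℂ)

def coherentGDiag (lam : I → ℝ) (P' : Matrix I I ℂ) : Matrix I I ℂ :=
  Matrix.of fun i j =>
    (-Complex.I) * (((lam i ^ ((1:ℝ)/2) - lam j ^ ((1:ℝ)/2)) /
      (2 * lam i ^ ((1:ℝ)/4) * lam j ^ ((1:ℝ)/4) *
        (lam i ^ ((1:ℝ)/2) + lam j ^ ((1:ℝ)/2))) : ℝ) : ℂ) *
      (∑ t, ((lam t ^ ((1:ℝ)/2) : ℝ) : ℂ) * P' i t * P' t j)

lemma hermPow_eq_conj {σ : Matrix I I ℂ} (hσ : σ.IsHermitian) (r : ℝ) :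
    hermPow σ r = conjStarAlgAut ℂ _ hσ.eigenvectorUnitary (rpowDiag hσ.eigenvalues r) := by
  rw [hermPow, dif_pos hσ]
  rfl

lemma coherentG_eq_conj {σ : Matrix I I ℂ} (hσ : σ.IsHermitian) (P : Matrix I I ℂ) :
    coherentG σ P = conjStarAlgAut ℂ _ hσ.eigenvectorUnitary
      (coherentGDiag hσ.eigenvalues ((conjStarAlgAut ℂ _ hσ.eigenvectorUnitary).symm P)) := by
  rw [coherentG, dif_pos hσ]
  simp [coherentGDiag]

lemma rpowDiag_mul_rpowDiag {lam : I → ℝ} (hlam : ∀ i, 0 < lam i) (r s : ℝ) :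
    rpowDiag lam r * rpowDiag lam s = rpowDiag lam (r + s) := by
  simp only [rpowDiag, diagonal_mul_diagonal, ← Complex.ofReal_mul, ← Real.rpow_add (hlam _)]

omit [Fintype I] in
lemma star_rpowDiag (lam : I → ℝ) (r : ℝ) : star (rpowDiag lam r) = rpowDiag lam r := by
  ext i j
  by_cases h : i = j <;> simp [rpowDiag, h, eq_comm]

lemma hermPow_mul_hermPow {σ : Matrix I I ℂ} (hσ : σ.PosDef) (r s : ℝ) :
    hermPow σ r * hermPow σ s = hermPow σ (r + s) := by
  simp only [hermPow_eq_conj hσ.isHermitian, ← map_mul, rpowDiag_mul_rpowDiag hσ.eigenvalues_pos]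

lemma star_hermPow {σ : Matrix I I ℂ} (hσ : σ.IsHermitian) (r : ℝ) :
    star (hermPow σ r) = hermPow σ r := by
  rw [hermPow_eq_conj hσ, ← map_star, star_rpowDiag]

lemma star_jumpA {σ P : Matrix I I ℂ} (hσ : σ.IsHermitian) (hP : P.IsHermitian) :
    star (jumpA σ P) = hermPow σ (-((1:ℝ)/4)) * P * hermPow σ ((1:ℝ)/4) := by
  rw [jumpA, star_mul, star_mul, star_hermPow hσ, star_hermPow hσ, hP.star_eq, mul_assoc]

lemma jumpA_mul_hermPow_half {σ P : Matrix I I ℂ} (hσ : σ.PosDef) (hP : P.IsHermitian) :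
    jumpA σ P * hermPow σ ((1:ℝ)/2) = hermPow σ ((1:ℝ)/2) * star (jumpA σ P) := by
  rw [star_jumpA hσ.isHermitian hP, jumpA, mul_assoc _ (hermPow σ _), hermPow_mul_hermPow hσ,
    ← mul_assoc (hermPow σ _), ← mul_assoc (hermPow σ _), hermPow_mul_hermPow hσ]
  norm_num

lemma star_jumpA_mul_jumpA {σ P : Matrix I I ℂ} (hσ : σ.PosDef) (hP : P.IsHermitian) :
    star (jumpA σ P) * jumpA σ P =
      hermPow σ (-((1:ℝ)/4)) * P * hermPow σ ((1:ℝ)/2) * P * hermPow σ (-((1:ℝ)/4)) := by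
  rw [star_jumpA hσ.isHermitian hP, jumpA]
  simp only [mul_assoc]
  rw [← mul_assoc (hermPow σ ((1:ℝ)/4)), hermPow_mul_hermPow hσ]
  norm_num

lemma rpowDiag_sandwich_apply (lam : I → ℝ) (P' : Matrix I I ℂ) (i j : I) :
    (rpowDiag lam (-((1:ℝ)/4)) * P' * rpowDiag lam ((1:ℝ)/2) * P' *
        rpowDiag lam (-((1:ℝ)/4))) i j =
      ((lam i ^ (-((1:ℝ)/4)) : ℝ) : ℂ) * ((lam j ^ (-((1:ℝ)/4)) : ℝ) : ℂ) *
        ∑ t, ((lam t ^ ((1:ℝ)/2) : ℝ) : ℂ) * P' i t * P' t j := by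
  rw [rpowDiag, mul_diagonal, mul_apply, Finset.sum_mul, Finset.mul_sum]
  simp only [rpowDiag, mul_diagonal, diagonal_mul]
  exact Finset.sum_congr rfl fun t _ => by ring

lemma coherentGDiag_balance {lam : I → ℝ} (hlam : ∀ i, 0 < lam i) (P' : Matrix I I ℂ) :
    ((-Complex.I) • coherentGDiag lam P' - ((1:ℂ)/2) • (rpowDiag lam (-((1:ℝ)/4)) * P' *
        rpowDiag lam ((1:ℝ)/2) * P' * rpowDiag lam (-((1:ℝ)/4)))) * rpowDiag lam ((1:ℝ)/2) =
      rpowDiag lam ((1:ℝ)/2) * (Complex.I • coherentGDiag lam P' - ((1:ℂ)/2) •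
        (rpowDiag lam (-((1:ℝ)/4)) * P' * rpowDiag lam ((1:ℝ)/2) * P' *
          rpowDiag lam (-((1:ℝ)/4)))) := by
  have hsq : ∀ i, lam i ^ ((1:ℝ)/2) = (lam i ^ ((1:ℝ)/4)) ^ 2 := fun i => by
    rw [← Real.rpow_natCast, ← Real.rpow_mul (hlam i).le]; norm_num
  have hneg : ∀ i, lam i ^ (-((1:ℝ)/4)) = (lam i ^ ((1:ℝ)/4))⁻¹ := fun i =>
    Real.rpow_neg (hlam i).le _
  have hM := rpowDiag_sandwich_apply lam P'
  set M := rpowDiag lam (-((1:ℝ)/4)) * P' * rpowDiag lam ((1:ℝ)/2) * P' *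
    rpowDiag lam (-((1:ℝ)/4))
  ext i j
  simp only [Matrix.sub_apply, Matrix.smul_apply, smul_eq_mul, rpowDiag, mul_diagonal,
    diagonal_mul, hM, coherentGDiag, of_apply]
  set c := ∑ t, ((lam t ^ ((1:ℝ)/2) : ℝ) : ℂ) * P' i t * P' t j
  simp only [hsq, hneg]
  have hx : 0 < lam i ^ ((1:ℝ)/4) := Real.rpow_pos_of_pos (hlam i) _
  have hy : 0 < lam j ^ ((1:ℝ)/4) := Real.rpow_pos_of_pos (hlam j) _
  set x := lam i ^ ((1:ℝ)/4)
  set y := lam j ^ ((1:ℝ)/4)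
  have hxy : (x : ℂ) ^ 2 + (y : ℂ) ^ 2 ≠ 0 := by exact_mod_cast (by positivity : x ^ 2 + y ^ 2 ≠ 0)
  push_cast
  field_simp
  rw [Complex.I_sq]
  ring

lemma coherentG_balance {σ P : Matrix I I ℂ} (hσ : σ.PosDef) (hP : P.IsHermitian) :
    ((-Complex.I) • coherentG σ P - ((1:ℂ)/2) • (star (jumpA σ P) * jumpA σ P)) *
        hermPow σ ((1:ℝ)/2) =
      hermPow σ ((1:ℝ)/2) *
        (Complex.I • coherentG σ P - ((1:ℂ)/2) • (star (jumpA σ P) * jumpA σ P)) := by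
  have hσh := hσ.isHermitian
  rw [star_jumpA_mul_jumpA hσ hP, coherentG_eq_conj hσh]
  simp only [hermPow_eq_conj hσh]
  set φ := conjStarAlgAut ℂ _ hσh.eigenvectorUnitary
  set P' := φ.symm P
  rw [← φ.apply_symm_apply P]
  simp only [← map_mul, ← map_smul, ← map_sub]
  exact congrArg φ (coherentGDiag_balance hσ.eigenvalues_pos P')

end Balanced

theorem kms_detailed_balance_general
    (I : Type) [Fintype I] [DecidableEq I]
    (σ : Matrix I I ℂ) (hσpos : σ.PosDef)
    (P : Matrix I I ℂ) (hP : P.IsHermitian) :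
    ∀ B : Matrix I I ℂ,
      (LP σ P) (hermPow σ ((1:ℝ)/2) * B * hermPow σ ((1:ℝ)/2)) =
        hermPow σ ((1:ℝ)/2) *
          (Complex.I • (coherentG σ P * B - B * coherentG σ P)
            + star (jumpA σ P) * B * jumpA σ P
            - ((1:ℂ)/2) • (star (jumpA σ P) * jumpA σ P * B
                + B * (star (jumpA σ P) * jumpA σ P))) *
          hermPow σ ((1:ℝ)/2) := by
  intro B
  rw [LP, lindbladOp_apply, kms_identity_of_intertwine (coherentG_balance hσpos hP)
    (jumpA_mul_hermPow_half hσpos hP)]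
  congr 2
  simp only [sub_mul, mul_sub, smul_mul_assoc, mul_smul_comm, smul_sub, smul_add]
  module

/-- **KMS detailed balance**: the balanced Lindbladian `L^P` satisfies
`L^P(σ^{1/2} B σ^{1/2}) = σ^{1/2} (L^P)†(B) σ^{1/2}` for every `B`, where `(L^P)†` is the
(explicitly written) adjoint of `L^P` with respect to the trace inner product. -/
theorem kms_detailed_balance
    (I : Type) [Fintype I] [DecidableEq I]
    (σ : Matrix I I ℂ) (hσpos : σ.PosDef) (hσtr : σ.trace = 1)
    (P : Matrix I I ℂ) (hP : P.IsHermitian) :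
    ∀ B : Matrix I I ℂ,
      (LP σ P) (hermPow σ ((1:ℝ)/2) * B * hermPow σ ((1:ℝ)/2)) =
        hermPow σ ((1:ℝ)/2) *
          (Complex.I • (coherentG σ P * B - B * coherentG σ P)
            + star (jumpA σ P) * B * jumpA σ P
            - ((1:ℂ)/2) • (star (jumpA σ P) * jumpA σ P * B
                + B * (star (jumpA σ P) * jumpA σ P))) *
          hermPow σ ((1:ℝ)/2) :=
  kms_detailed_balance_general I σ hσpos P hP
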